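/- arXiv:2006.04657 — 2 statements merged into one kernel-verified Lean document; each statement's English description precedes it below -/
import Mathlib

section
/- Fix ε ≥ 0 and T with |T| < 1. The inequality -1/2 - (1/2)log(S²) + S²/(2(1-T²)) ≤ ε has a real solution S ≠ 0 if and only if T² ≤ 1 - e^{-2ε}. -/
/-- The ε-stealthiness constraint has a feasible S ≠ 0 iff T² ≤ 1 - e^{-2ε}. -/
theorem stmt6 (ε T : ℝ) (hε : 0 ≤ ε) (hT : |T| < 1) :
    (∃ S : ℝ, S ≠ 0 ∧
        -1 / 2 - (1 / 2) * Real.log (S ^ 2) + S ^ 2 / (2 * (1 - T ^ 2)) ≤ ε) ↔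
      T ^ 2 ≤ 1 - Real.exp (-2 * ε) := by
  have ha : 0 < 1 - T ^ 2 := by
    have : T ^ 2 < 1 := by nlinarith [abs_nonneg T, sq_abs T, sq_nonneg (|T| - 1)]
    linarith
  constructor
  · rintro ⟨S, hS, hle⟩
    have hx : 0 < S ^ 2 := by positivity
    have h1 : Real.log (S ^ 2) - Real.log (1 - T ^ 2) ≤ S ^ 2 / (1 - T ^ 2) - 1 := by
      have := Real.log_le_sub_one_of_pos (show (0:ℝ) < S ^ 2 / (1 - T ^ 2) by positivity)
      rwa [Real.log_div (ne_of_gt hx) (ne_of_gt ha)] at this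
    have hdiv : S ^ 2 / (2 * (1 - T ^ 2)) = (S ^ 2 / (1 - T ^ 2)) / 2 := by
      field_simp
    rw [hdiv] at hle
    have h2 : -2 * ε ≤ Real.log (1 - T ^ 2) := by linarith
    have h3 : Real.exp (-2 * ε) ≤ 1 - T ^ 2 :=
      (Real.exp_log ha) ▸ Real.exp_le_exp.mpr h2
    linarith
  · intro h
    refine ⟨Real.sqrt (1 - T ^ 2), ne_of_gt (Real.sqrt_pos.mpr ha), ?_⟩
    have hsq : Real.sqrt (1 - T ^ 2) ^ 2 = 1 - T ^ 2 := Real.sq_sqrt ha.le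
    rw [hsq]
    have hlog : -2 * ε ≤ Real.log (1 - T ^ 2) := by
      have hle : Real.exp (-2 * ε) ≤ 1 - T ^ 2 := by linarith
      calc -2 * ε = Real.log (Real.exp (-2 * ε)) := (Real.log_exp _).symm
        _ ≤ Real.log (1 - T ^ 2) := Real.log_le_log (Real.exp_pos _) hle
    have hdiv : (1 - T ^ 2) / (2 * (1 - T ^ 2)) = 1 / 2 := by
      field_simp
    rw [hdiv]
    linarith
end

section
/- For fixed T with |T| < 1, the function S ↦ (1-S)² + T²S²/(1-T²) - 2ATS(1-S-T²)/((1-T²)(1-AT)) is strictly decreasing on S < 0 when 0 ≤ T < 1 and 0 < A < 1; hence the supremum of J over an interval [-S_max, -S_min] of valid negative S values is attained at S = -S_max. -/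
/-- For fixed 0 ≤ T < 1 and 0 < A < 1, the objective J(T,·) is strictly
decreasing on S < 0; hence its supremum over [-S_max, -S_min] is attained
at S = -S_max. -/
theorem stmt14 (A T : ℝ) (hA : 0 < A) (hA1 : A < 1) (hT0 : 0 ≤ T) (hT1 : T < 1) :
    StrictAntiOn
      (fun S : ℝ => (1 - S) ^ 2 + T ^ 2 * S ^ 2 / (1 - T ^ 2) -
        2 * A * T * S * (1 - S - T ^ 2) / ((1 - T ^ 2) * (1 - A * T)))
      (Set.Iio (0 : ℝ)) ∧
    ∀ Smin Smax : ℝ, 0 < Smin → Smin ≤ Smax →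
      IsGreatest
        ((fun S : ℝ => (1 - S) ^ 2 + T ^ 2 * S ^ 2 / (1 - T ^ 2) -
            2 * A * T * S * (1 - S - T ^ 2) / ((1 - T ^ 2) * (1 - A * T))) ''
          Set.Icc (-Smax) (-Smin))
        ((1 - (-Smax)) ^ 2 + T ^ 2 * (-Smax) ^ 2 / (1 - T ^ 2) -
          2 * A * T * (-Smax) * (1 - (-Smax) - T ^ 2) / ((1 - T ^ 2) * (1 - A * T))) := by
  have hu : (0:ℝ) < 1 - T ^ 2 := by nlinarith
  have hv : (0:ℝ) < 1 - A * T := by nlinarith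
  have key : StrictAntiOn
      (fun S : ℝ => (1 - S) ^ 2 + T ^ 2 * S ^ 2 / (1 - T ^ 2) -
        2 * A * T * S * (1 - S - T ^ 2) / ((1 - T ^ 2) * (1 - A * T)))
      (Set.Iio (0 : ℝ)) := by
    intro a ha b hb hab
    simp only [Set.mem_Iio] at ha hb
    simp only
    rw [← sub_pos]
    have hid : ((1 - a) ^ 2 + T ^ 2 * a ^ 2 / (1 - T ^ 2) -
        2 * A * T * a * (1 - a - T ^ 2) / ((1 - T ^ 2) * (1 - A * T))) -
        ((1 - b) ^ 2 + T ^ 2 * b ^ 2 / (1 - T ^ 2) -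
        2 * A * T * b * (1 - b - T ^ 2) / ((1 - T ^ 2) * (1 - A * T))) =
        (b - a) * ((2 - a - b) + T ^ 2 * (-(a + b)) / (1 - T ^ 2) +
          2 * A * T * (1 - T ^ 2 - (a + b)) / ((1 - T ^ 2) * (1 - A * T))) := by
      field_simp
      ring
    rw [hid]
    apply mul_pos (by linarith)
    have h1 : (0:ℝ) ≤ T ^ 2 * (-(a + b)) / (1 - T ^ 2) := by
      apply div_nonneg _ hu.le
      nlinarith
    have h2 : (0:ℝ) ≤ 2 * A * T * (1 - T ^ 2 - (a + b)) / ((1 - T ^ 2) * (1 - A * T)) := by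
      apply div_nonneg _ (mul_pos hu hv).le
      have : (0:ℝ) ≤ A * T := by positivity
      nlinarith
    linarith
  refine ⟨key, ?_⟩
  intro Smin Smax h0 hle
  have hm : -Smax ≤ -Smin := by linarith
  constructor
  · exact ⟨-Smax, ⟨le_refl _, hm⟩, rfl⟩
  · rintro y ⟨S, ⟨hS1, hS2⟩, rfl⟩
    rcases eq_or_lt_of_le hS1 with h | h
    · rw [← h]
    · have h1 : (-Smax : ℝ) ∈ Set.Iio (0:ℝ) := by simp; linarith
      have h2 : S ∈ Set.Iio (0:ℝ) := by simp; linarith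
      exact le_of_lt (key h1 h2 h)
end
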